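/- arXiv:2511.15419 — 2 statements merged into one kernel-verified Lean document; each statement's English description precedes it below -/
import Mathlib

section
/- Let λ_1, …, λ_p be row vectors of indeterminates of length k, and for each i let λ̃_i = (λ_{i1}, …, λ_{i,k−1}). Let J₁ = ⟨λ_{jk} + λ̃_p λ̃_j^T : 1 ≤ j ≤ p−1⟩ and J₂ = ⟨λ_{ik}λ_{jk} + λ̃_i λ̃_j^T : 1 ≤ i < j ≤ p−1⟩. Then J₁ + J₂ = J₁ + ⟨λ̃_i (I_{k−1} + λ̃_p^T λ̃_p) λ̃_j^T : 1 ≤ i < j ≤ p−1⟩, where I_{k−1} is the (k−1)×(k−1) identity matrix. -/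
open MvPolynomial

/-- With rows indexed by `Fin (n+1)` (row `Fin.last n` being the `p`-th row, `n = p−1`)
and columns by `Fin (m+1)` (column `Fin.last m` being the `k`-th column, `m = k−1`),
writing `λ̃_i` for the first `m` entries of row `i`:
`J₁ + J₂ = J₁ + ⟨λ̃_i (I + λ̃_pᵀ λ̃_p) λ̃_jᵀ : i < j⟩`, where
`J₁ = ⟨λ_{jk} + λ̃_p λ̃_jᵀ⟩` and `J₂ = ⟨λ_{ik}λ_{jk} + λ̃_i λ̃_jᵀ⟩`. -/
theorem stmt_6 (n m : ℕ)
    (lam : Fin (n + 1) → Fin (m + 1) → MvPolynomial (Fin (n + 1) × Fin (m + 1)) ℝ)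
    (hlam : ∀ i j, lam i j = X (i, j))
    (J₁ J₂ J₂' : Ideal (MvPolynomial (Fin (n + 1) × Fin (m + 1)) ℝ))
    (hJ₁ : J₁ = Ideal.span {q | ∃ j : Fin n, q =
        lam j.castSucc (Fin.last m)
          + ∑ l : Fin m, lam (Fin.last n) l.castSucc * lam j.castSucc l.castSucc})
    (hJ₂ : J₂ = Ideal.span {q | ∃ i j : Fin n, i < j ∧ q =
        lam i.castSucc (Fin.last m) * lam j.castSucc (Fin.last m)
          + ∑ l : Fin m, lam i.castSucc l.castSucc * lam j.castSucc l.castSucc})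
    (hJ₂' : J₂' = Ideal.span {q | ∃ i j : Fin n, i < j ∧ q =
        (∑ l : Fin m, lam i.castSucc l.castSucc * lam j.castSucc l.castSucc)
          + (∑ l : Fin m, lam i.castSucc l.castSucc * lam (Fin.last n) l.castSucc)
            * (∑ l : Fin m, lam (Fin.last n) l.castSucc * lam j.castSucc l.castSucc)}) :
    J₁ + J₂ = J₁ + J₂' := by
  -- abbreviations
  set x : Fin n → _ := fun i => lam i.castSucc (Fin.last m) with hx
  set S : Fin n → Fin n → _ := fun i j =>
    ∑ l : Fin m, lam i.castSucc l.castSucc * lam j.castSucc l.castSucc with hS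
  set T : Fin n → _ := fun i =>
    ∑ l : Fin m, lam (Fin.last n) l.castSucc * lam i.castSucc l.castSucc with hT
  have hcomm : ∀ i : Fin n,
      (∑ l : Fin m, lam i.castSucc l.castSucc * lam (Fin.last n) l.castSucc) = T i :=
    fun i => Finset.sum_congr rfl fun _ _ => mul_comm _ _
  subst hJ₁ hJ₂ hJ₂'
  have hA : ∀ j : Fin n, x j + T j ∈
      Ideal.span {q | ∃ j : Fin n, q = x j + T j} :=
    fun j => Ideal.subset_span ⟨j, rfl⟩
  rw [Submodule.add_eq_sup, Submodule.add_eq_sup]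
  refine le_antisymm (sup_le le_sup_left ?_) (sup_le le_sup_left ?_)
  · rw [Ideal.span_le]
    rintro q ⟨i, j, hij, rfl⟩
    have h2 : S i j + T i * T j ∈
        (Ideal.span {q | ∃ j : Fin n, q = x j + T j} ⊔
          Ideal.span {q | ∃ i j : Fin n, i < j ∧ q = S i j + (∑ l : Fin m, lam i.castSucc l.castSucc * lam (Fin.last n) l.castSucc) * T j}) := by
      apply Ideal.mem_sup_right
      apply Ideal.subset_span
      exact ⟨i, j, hij, by rw [hcomm i]⟩
    have h1 : x i * (x j + T j) + (x i + T i) * x j - (x i + T i) * (x j + T j) ∈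
        (Ideal.span {q | ∃ j : Fin n, q = x j + T j} ⊔
          Ideal.span {q | ∃ i j : Fin n, i < j ∧ q = S i j + (∑ l : Fin m, lam i.castSucc l.castSucc * lam (Fin.last n) l.castSucc) * T j}) := by
      apply Ideal.mem_sup_left
      exact sub_mem (add_mem (Ideal.mul_mem_left _ _ (hA j)) (Ideal.mul_mem_right _ _ (hA i)))
        (Ideal.mul_mem_right _ _ (hA i))
    have heq : x i * x j + S i j =
        (S i j + T i * T j) + (x i * (x j + T j) + (x i + T i) * x j - (x i + T i) * (x j + T j)) := by
      ring
    rw [heq]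
    exact add_mem h2 h1
  · rw [Ideal.span_le]
    rintro q ⟨i, j, hij, rfl⟩
    have h2 : x i * x j + S i j ∈
        (Ideal.span {q | ∃ j : Fin n, q = x j + T j} ⊔
          Ideal.span {q | ∃ i j : Fin n, i < j ∧ q = x i * x j + S i j}) :=
      Ideal.mem_sup_right (Ideal.subset_span ⟨i, j, hij, rfl⟩)
    have h1 : (x i + T i) * (x j + T j) - x i * (x j + T j) - (x i + T i) * x j ∈
        (Ideal.span {q | ∃ j : Fin n, q = x j + T j} ⊔
          Ideal.span {q | ∃ i j : Fin n, i < j ∧ q = x i * x j + S i j}) := by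
      apply Ideal.mem_sup_left
      exact sub_mem (sub_mem (Ideal.mul_mem_right _ _ (hA i)) (Ideal.mul_mem_left _ _ (hA j)))
        (Ideal.mul_mem_right _ _ (hA i))
    have heq : S i j + (∑ l : Fin m, lam i.castSucc l.castSucc * lam (Fin.last n) l.castSucc) * T j =
        (x i * x j + S i j) + ((x i + T i) * (x j + T j) - x i * (x j + T j) - (x i + T i) * x j) := by
      rw [hcomm i]; ring
    rw [heq]
    exact add_mem h2 h1
end

section
/- Let σ ≠ 0 be a real number and p ≥ 3. In the polynomial ring ℝ[λ_1, …, λ_p], the ideal I = ⟨λ_1λ_2 − σ⟩ + ⟨λ_1λ_i : 3 ≤ i ≤ p⟩ + ⟨λ_jλ_l : 2 ≤ j < l ≤ p⟩ equals the ideal ⟨λ_1λ_2 − σ, λ_3, λ_4, …, λ_p⟩. -/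
open MvPolynomial

/-- For `σ ≠ 0` and `p ≥ 3` (variables `λ_1, …, λ_p` indexed by `Fin p`, with
`λ_i = X ⟨i−1⟩`), the ideal `⟨λ_1λ_2 − σ⟩ + ⟨λ_1λ_i : 3 ≤ i⟩ + ⟨λ_jλ_l : 2 ≤ j < l⟩`
equals `⟨λ_1λ_2 − σ, λ_3, …, λ_p⟩`. -/
theorem stmt_9 (p : ℕ) (hp : 3 ≤ p) (σ : ℝ) (hσ : σ ≠ 0) :
    (Ideal.span {X (⟨0, by omega⟩ : Fin p) * X ⟨1, by omega⟩ - C σ}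
      + Ideal.span {q : MvPolynomial (Fin p) ℝ | ∃ i : Fin p, 2 ≤ (i : ℕ) ∧
          q = X (⟨0, by omega⟩ : Fin p) * X i}
      + Ideal.span {q : MvPolynomial (Fin p) ℝ | ∃ j l : Fin p, 1 ≤ (j : ℕ) ∧ j < l ∧
          q = X j * X l})
    = Ideal.span ({X (⟨0, by omega⟩ : Fin p) * X ⟨1, by omega⟩ - C σ}
        ∪ {q : MvPolynomial (Fin p) ℝ | ∃ i : Fin p, 2 ≤ (i : ℕ) ∧ q = X i}) := by
  apply le_antisymm
  · refine sup_le (sup_le ?_ ?_) ?_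
    · rw [Ideal.span_le]
      rintro q rfl
      exact Ideal.subset_span (Or.inl rfl)
    · rw [Ideal.span_le]
      rintro q ⟨i, hi, rfl⟩
      exact Ideal.mul_mem_left _ _ (Ideal.subset_span (Or.inr ⟨i, hi, rfl⟩))
    · rw [Ideal.span_le]
      rintro q ⟨j, l, hj, hjl, rfl⟩
      have hl : 2 ≤ (l : ℕ) := by have := hjl; rw [Fin.lt_def] at this; omega
      exact Ideal.mul_mem_left _ _ (Ideal.subset_span (Or.inr ⟨l, hl, rfl⟩))
  · set I := Ideal.span {X (⟨0, by omega⟩ : Fin p) * X ⟨1, by omega⟩ - C σ}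
      + Ideal.span {q : MvPolynomial (Fin p) ℝ | ∃ i : Fin p, 2 ≤ (i : ℕ) ∧
          q = X (⟨0, by omega⟩ : Fin p) * X i}
      + Ideal.span {q : MvPolynomial (Fin p) ℝ | ∃ j l : Fin p, 1 ≤ (j : ℕ) ∧ j < l ∧
          q = X j * X l} with hI
    rw [Ideal.span_le]
    rintro q (rfl | ⟨i, hi, rfl⟩)
    · exact Ideal.mem_sup_left (Ideal.mem_sup_left (Ideal.subset_span rfl))
    · have h1 : X (⟨0, by omega⟩ : Fin p) * X i ∈ I :=
        Ideal.mem_sup_left (Ideal.mem_sup_right (Ideal.subset_span ⟨i, hi, rfl⟩))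
      have hf : X (⟨0, by omega⟩ : Fin p) * X (⟨1, by omega⟩ : Fin p) - C σ ∈ I :=
        Ideal.mem_sup_left (Ideal.mem_sup_left (Ideal.subset_span rfl))
      have hc : (C σ⁻¹ : MvPolynomial (Fin p) ℝ) * C σ = 1 := by
        rw [← C_mul, inv_mul_cancel₀ hσ, C_1]
      have key : X i = C σ⁻¹ * (X (⟨1, by omega⟩ : Fin p) * (X (⟨0, by omega⟩ : Fin p) * X i)
          - X i * (X (⟨0, by omega⟩ : Fin p) * X (⟨1, by omega⟩ : Fin p) - C σ)) := by
        linear_combination (-(X i)) * hc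
      rw [key]
      exact Ideal.mul_mem_left _ _ (Ideal.sub_mem _ (Ideal.mul_mem_left _ _ h1)
        (Ideal.mul_mem_left _ _ hf))
end
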